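/- arXiv:1803.10923 — 5 statements merged into one kernel-verified Lean document; each statement's English description precedes it below -/
import Mathlib

section
/- Let F_e : 2^V → ℝ_+ (e ∈ E) be nonnegative submodular functions with F_e(∅) = F_e(V) = 0, with Lovász extensions f_e, and let b ∈ ℝ^V. If x* minimizes the convex function x ↦ (1/2) Σ_{e∈E} f_e(x)^2 − ⟨b, x⟩ over ℝ^V, then there exist w_e ∈ ∂f_e(x*) = argmax_{w ∈ B(F_e)} ⟨x*, w⟩ for each e ∈ E such that Σ_{e∈E} f_e(x*) · w_e = b. In other words, b lies in the image L_F(x*) of the submodular Laplacian. -/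
/-!
Moving from `x*` in a direction `d` by `t > 0` and choosing maximizers
`w_e(t) ∈ argmax_{B(F_e)} ⟨x* + t d, ·⟩`, one has `f_e(x* + t d) ≤ f_e(x*) + t ⟨d, w_e(t)⟩`, and
since `f_e ≥ 0` this inequality may be squared. Minimality of `x*` then gives
`⟨d, b⟩ ≤ Σ_e f_e(x*) ⟨d, w_e(t)⟩ + O(t)`. Along a subsequence `t → 0` the `w_e(t)` converge in the
compact base polytopes, and every limit lies in `∂f_e(x*)`. So for every `d` some point of the
compact convex set `Σ_e f_e(x*) ∂f_e(x*)` beats `b` in direction `d`, and by Hahn–Banach `b`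
belongs to that set.
-/

open Filter Topology

section

variable {V : Type*}

theorem isLinearMap_sum_apply (S : Finset V) : IsLinearMap ℝ fun w : V → ℝ => ∑ v ∈ S, w v :=
  ⟨fun w w' => by simp only [Pi.add_apply, Finset.sum_add_distrib],
    fun c w => by simp only [Pi.smul_apply, smul_eq_mul, Finset.mul_sum]⟩

variable [Fintype V]

def basePolytope (P : Finset V → ℝ) : Set (V → ℝ) :=
  {w | (∀ S : Finset V, ∑ v ∈ S, w v ≤ P S) ∧ ∑ v, w v = P Finset.univ}

section BasePolytope

variable {P : Finset V → ℝ}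

theorem zero_mem_basePolytope (hnn : ∀ S, 0 ≤ P S) (huniv : P Finset.univ = 0) :
    (0 : V → ℝ) ∈ basePolytope P :=
  ⟨fun S => by simpa using hnn S, by simpa using huniv.symm⟩

theorem apply_le_of_mem_basePolytope {w : V → ℝ} (hw : w ∈ basePolytope P) (v : V) :
    w v ≤ P {v} := by
  simpa using hw.1 {v}

theorem le_apply_of_mem_basePolytope [DecidableEq V] {w : V → ℝ} (hw : w ∈ basePolytope P)
    (v : V) : P Finset.univ - P (Finset.univ.erase v) ≤ w v := by
  linarith [Finset.sum_erase_add Finset.univ w (Finset.mem_univ v), hw.1 (Finset.univ.erase v),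
    hw.2]

variable (P)

theorem basePolytope_eq_iInter_inter :
    basePolytope P =
      (⋂ S : Finset V, {w | ∑ v ∈ S, w v ≤ P S}) ∩ {w | ∑ v, w v = P Finset.univ} := by
  ext; simp [basePolytope]

theorem isClosed_basePolytope : IsClosed (basePolytope P) := by
  rw [basePolytope_eq_iInter_inter]
  exact (isClosed_iInter fun S => isClosed_le (by fun_prop) continuous_const).inter
    (isClosed_eq (by fun_prop) continuous_const)

theorem convex_basePolytope : Convex ℝ (basePolytope P) := by
  rw [basePolytope_eq_iInter_inter]
  exact (convex_iInter fun S => convex_halfSpace_le (isLinearMap_sum_apply S) _).inter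
    (convex_hyperplane (isLinearMap_sum_apply _) _)

theorem isCompact_basePolytope : IsCompact (basePolytope P) := by
  classical
  exact (isCompact_univ_pi fun v => isCompact_Icc).of_isClosed_subset (isClosed_basePolytope P)
    fun w hw v _ => ⟨le_apply_of_mem_basePolytope hw v, apply_le_of_mem_basePolytope hw v⟩

end BasePolytope

/-- `argmax_{w ∈ C} ⟨x, w⟩`, which is `∂f(x)` when `f` is the support function of `C`. -/
def exposedFace (C : Set (V → ℝ)) (x : V → ℝ) : Set (V → ℝ) :=
  {w ∈ C | ∀ w' ∈ C, x ⬝ᵥ w' ≤ x ⬝ᵥ w}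

section ExposedFace

variable {C : Set (V → ℝ)} {g : (V → ℝ) → ℝ}

theorem exposedFace_nonempty {x : V → ℝ} (hg : IsGreatest ((x ⬝ᵥ ·) '' C) (g x)) :
    (exposedFace C x).Nonempty := by
  obtain ⟨w, hw, hwx⟩ := hg.1
  exact ⟨w, hw, fun w' hw' => (hg.2 ⟨w', hw', rfl⟩).trans_eq hwx.symm⟩

theorem mem_exposedFace_iff {x : V → ℝ} (hg : IsGreatest ((x ⬝ᵥ ·) '' C) (g x)) {w : V → ℝ} :
    w ∈ exposedFace C x ↔ w ∈ C ∧ x ⬝ᵥ w = g x := by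
  obtain ⟨a, ha, hag⟩ := hg.1
  refine ⟨fun hw => ⟨hw.1, le_antisymm (hg.2 ⟨w, hw.1, rfl⟩) (hag ▸ hw.2 a ha)⟩,
    fun hw => ⟨hw.1, fun w' hw' => hw.2 ▸ hg.2 ⟨w', hw', rfl⟩⟩⟩

theorem le_add_dotProduct_of_mem_exposedFace (hg : ∀ x, IsGreatest ((x ⬝ᵥ ·) '' C) (g x))
    {x y w : V → ℝ} (hw : w ∈ exposedFace C y) : g y ≤ g x + (y - x) ⬝ᵥ w := by
  have hxw : x ⬝ᵥ w ≤ g x := (hg x).2 ⟨w, hw.1, rfl⟩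
  rw [← ((mem_exposedFace_iff (hg y)).1 hw).2, sub_dotProduct]
  linarith

theorem exposedFace_eq_inter_biInter (C : Set (V → ℝ)) (x : V → ℝ) :
    exposedFace C x = C ∩ ⋂ w' ∈ C, {w | x ⬝ᵥ w' ≤ x ⬝ᵥ w} := by
  ext; simp [exposedFace]

theorem IsClosed.exposedFace (hC : IsClosed C) (x : V → ℝ) : IsClosed (exposedFace C x) := by
  rw [exposedFace_eq_inter_biInter]
  exact hC.inter (isClosed_biInter fun w' _ => _root_.isClosed_le continuous_const (by fun_prop))

theorem IsCompact.exposedFace (hC : IsCompact C) (x : V → ℝ) : IsCompact (exposedFace C x) :=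
  hC.of_isClosed_subset (hC.isClosed.exposedFace x) fun _ hw => hw.1

theorem Convex.exposedFace (hC : Convex ℝ C) (x : V → ℝ) : Convex ℝ (exposedFace C x) := by
  rw [exposedFace_eq_inter_biInter]
  exact hC.inter (convex_iInter₂ fun w' _ =>
    convex_halfSpace_ge ⟨dotProduct_add x, fun c w => dotProduct_smul c x w⟩ _)

theorem mem_exposedFace_of_tendsto {ι : Type*} {l : Filter ι} [l.NeBot] (hC : IsClosed C)
    {x w : ι → V → ℝ} {x₀ w₀ : V → ℝ} (hx : Tendsto x l (𝓝 x₀)) (hw : Tendsto w l (𝓝 w₀))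
    (hxw : ∀ i, w i ∈ exposedFace C (x i)) : w₀ ∈ exposedFace C x₀ := by
  refine ⟨hC.mem_of_tendsto hw (Eventually.of_forall fun i => (hxw i).1), fun w' hw' => ?_⟩
  have hpair : Continuous fun p : (V → ℝ) × (V → ℝ) => p.1 ⬝ᵥ p.2 := by fun_prop
  exact le_of_tendsto_of_tendsto' ((hpair.tendsto _).comp (hx.prodMk_nhds tendsto_const_nhds))
    ((hpair.tendsto _).comp (hx.prodMk_nhds hw)) fun i => (hxw i).2 w' hw'

end ExposedFace

theorem mem_of_forall_exists_dotProduct_le {K : Set (V → ℝ)} (hK : Convex ℝ K)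
    (hKc : IsClosed K) {b : V → ℝ} (h : ∀ d, ∃ k ∈ K, d ⬝ᵥ b ≤ d ⬝ᵥ k) : b ∈ K := by
  classical
  by_contra hb
  obtain ⟨φ, u, hφK, hφb⟩ := geometric_hahn_banach_closed_point hK hKc hb
  set d : V → ℝ := fun v => φ fun u => if v = u then 1 else 0
  have hφ : ∀ x, φ x = d ⬝ᵥ x := fun x =>
    (φ.toLinearMap.pi_apply_eq_sum_univ x).trans <| by simp [d, dotProduct, mul_comm]
  obtain ⟨k, hk, hbk⟩ := h d
  linarith [hφK k hk, hφ k, hφ b]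

section Minimizer

variable {E : Type*} [Fintype E] {C : E → Set (V → ℝ)} {g : E → (V → ℝ) → ℝ} {b xs : V → ℝ}

noncomputable def laplacianObjective (g : E → (V → ℝ) → ℝ) (b x : V → ℝ) : ℝ :=
  2⁻¹ * ∑ e, g e x ^ 2 - b ⬝ᵥ x

theorem dotProduct_le_sum_mul_add_of_mem_exposedFace
    (hg : ∀ e x, IsGreatest ((x ⬝ᵥ ·) '' C e) (g e x)) (hg0 : ∀ e x, 0 ≤ g e x)
    (hmin : ∀ x, laplacianObjective g b xs ≤ laplacianObjective g b x)
    {d : V → ℝ} {t : ℝ} (ht : 0 < t) {w : E → V → ℝ}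
    (hw : ∀ e, w e ∈ exposedFace (C e) (xs + t • d)) :
    d ⬝ᵥ b ≤ ∑ e, g e xs * (d ⬝ᵥ w e) + t / 2 * ∑ e, (d ⬝ᵥ w e) ^ 2 := by
  have hsq : ∀ e, g e (xs + t • d) ^ 2 ≤ (g e xs + t * (d ⬝ᵥ w e)) ^ 2 := fun e => by
    refine pow_le_pow_left₀ (hg0 _ _) ?_ 2
    simpa [smul_dotProduct] using le_add_dotProduct_of_mem_exposedFace (hg e) (x := xs) (hw e)
  have hexpand : ∑ e, (g e xs + t * (d ⬝ᵥ w e)) ^ 2 = ∑ e, g e xs ^ 2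
      + 2 * t * ∑ e, g e xs * (d ⬝ᵥ w e) + t ^ 2 * ∑ e, (d ⬝ᵥ w e) ^ 2 := by
    simp only [Finset.mul_sum, ← Finset.sum_add_distrib]
    exact Finset.sum_congr rfl fun e _ => by ring
  have hstep := hmin (xs + t • d)
  rw [laplacianObjective, laplacianObjective, dotProduct_add, dotProduct_smul, smul_eq_mul,
    dotProduct_comm b d] at hstep
  have hsum := Finset.sum_le_sum fun e (_ : e ∈ Finset.univ) => hsq e
  refine le_of_mul_le_mul_left ?_ ht
  nlinarith

theorem exists_mem_exposedFace_dotProduct_le (hC : ∀ e, IsCompact (C e))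
    (hg : ∀ e x, IsGreatest ((x ⬝ᵥ ·) '' C e) (g e x)) (hg0 : ∀ e x, 0 ≤ g e x)
    (hmin : ∀ x, laplacianObjective g b xs ≤ laplacianObjective g b x) (d : V → ℝ) :
    ∃ w : E → V → ℝ, (∀ e, w e ∈ exposedFace (C e) xs) ∧ d ⬝ᵥ b ≤ ∑ e, g e xs * (d ⬝ᵥ w e) := by
  set t : ℕ → ℝ := fun n => 1 / ((n : ℝ) + 1)
  choose w hw using fun n e => exposedFace_nonempty (hg e (xs + t n • d))
  obtain ⟨w₀, -, ψ, hψ, hlim⟩ :=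
    (isCompact_univ_pi hC).tendsto_subseq fun n e _ => (hw n e).1
  have ht : Tendsto (fun k => t (ψ k)) atTop (𝓝 0) :=
    tendsto_one_div_add_atTop_nhds_zero_nat.comp hψ.tendsto_atTop
  have hlim_e : ∀ e, Tendsto (fun k => w (ψ k) e) atTop (𝓝 (w₀ e)) := fun e =>
    tendsto_pi_nhds.1 hlim e
  have hx : Tendsto (fun k => xs + t (ψ k) • d) atTop (𝓝 xs) := by
    simpa using tendsto_const_nhds.add (ht.smul_const d)
  refine ⟨w₀, fun e => mem_exposedFace_of_tendsto (hC e).isClosed hx (hlim_e e)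
    fun k => hw (ψ k) e, ?_⟩
  have hq : ∀ e, Tendsto (fun k => d ⬝ᵥ w (ψ k) e) atTop (𝓝 (d ⬝ᵥ w₀ e)) := fun e =>
    ((continuous_const.dotProduct continuous_id).tendsto _).comp (hlim_e e)
  have hrhs := (tendsto_finsetSum Finset.univ fun e _ => (hq e).const_mul (g e xs)).add
    ((ht.div_const 2).mul (tendsto_finsetSum Finset.univ fun e _ => (hq e).pow 2))
  simpa using ge_of_tendsto' hrhs fun k =>
    dotProduct_le_sum_mul_add_of_mem_exposedFace hg hg0 hmin (by positivity) fun e => hw (ψ k) e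

theorem exists_mem_exposedFace_sum_smul_eq (hC : ∀ e, IsCompact (C e))
    (hCc : ∀ e, Convex ℝ (C e))
    (hg : ∀ e x, IsGreatest ((x ⬝ᵥ ·) '' C e) (g e x)) (hg0 : ∀ e x, 0 ≤ g e x)
    (hmin : ∀ x, laplacianObjective g b xs ≤ laplacianObjective g b x) :
    ∃ w : E → V → ℝ, (∀ e, w e ∈ exposedFace (C e) xs) ∧ ∑ e, g e xs • w e = b := by
  let τ : (E → V → ℝ) →ₗ[ℝ] V → ℝ := ∑ e, g e xs • LinearMap.proj e
  have hτ : ∀ w, τ w = ∑ e, g e xs • w e := fun w => by simp [τ]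
  have hb : b ∈ τ '' Set.univ.pi fun e => exposedFace (C e) xs := by
    refine mem_of_forall_exists_dotProduct_le
      ((convex_pi fun e _ => (hCc e).exposedFace xs).linear_image τ)
      ((isCompact_univ_pi fun e => (hC e).exposedFace xs).image
        τ.continuous_of_finiteDimensional).isClosed fun d => ?_
    obtain ⟨w, hw, hle⟩ := exists_mem_exposedFace_dotProduct_le hC hg hg0 hmin d
    refine ⟨τ w, ⟨w, fun e _ => hw e, rfl⟩, hle.trans_eq ?_⟩
    simp [hτ, dotProduct_sum, dotProduct_smul]
  obtain ⟨w, hw, rfl⟩ := hb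
  exact ⟨w, fun e => hw e trivial, (hτ w).symm⟩

end Minimizer

end

theorem minimizer_solves_laplacian_general {V E : Type*} [Fintype V] [Fintype E]
    (F : E → Finset V → ℝ)
    (hnn : ∀ e S, 0 ≤ F e S)
    (hV : ∀ e, F e Finset.univ = 0)
    (f : E → (V → ℝ) → ℝ)
    (hf : ∀ e (x : V → ℝ), IsGreatest
      {r : ℝ | ∃ w : V → ℝ,
        ((∀ S : Finset V, ∑ v ∈ S, w v ≤ F e S) ∧ ∑ v, w v = F e Finset.univ)
        ∧ r = ∑ v, x v * w v} (f e x))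
    (b : V → ℝ) (xs : V → ℝ)
    (hmin : ∀ x : V → ℝ,
      2⁻¹ * (∑ e, (f e xs) ^ 2) - ∑ v, b v * xs v ≤
      2⁻¹ * (∑ e, (f e x) ^ 2) - ∑ v, b v * x v) :
    ∃ w : E → V → ℝ,
      (∀ e, ((∀ S : Finset V, ∑ v ∈ S, w e v ≤ F e S) ∧ ∑ v, w e v = F e Finset.univ)
        ∧ ∑ v, xs v * w e v = f e xs) ∧
      (∀ v, ∑ e, f e xs * w e v = b v) := by
  have hg : ∀ e x, IsGreatest ((x ⬝ᵥ ·) '' basePolytope (F e)) (f e x) := fun e x => by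
    convert hf e x using 1
    ext r
    exact exists_congr fun w => and_congr_right' eq_comm
  have hg0 : ∀ e x, 0 ≤ f e x := fun e x => by
    simpa using (hg e x).2 ⟨0, zero_mem_basePolytope (hnn e) (hV e), rfl⟩
  obtain ⟨w, hw, hsum⟩ := exists_mem_exposedFace_sum_smul_eq (fun e => isCompact_basePolytope _)
    (fun e => convex_basePolytope _) hg hg0 hmin
  refine ⟨w, fun e => (mem_exposedFace_iff (hg e xs)).1 (hw e), fun v => ?_⟩
  simpa using congrFun hsum v

/-- A minimizer `x*` of `(1/2) Σ_e f_e(x)² − ⟨b,x⟩` satisfies `b ∈ L_F(x*)`: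
there exist `w_e ∈ ∂f_e(x*) = argmax_{w ∈ B(F_e)} ⟨x*,w⟩` with
`Σ_e f_e(x*) · w_e = b`. -/
theorem minimizer_solves_laplacian {V E : Type*} [Fintype V] [DecidableEq V] [Fintype E]
    (F : E → Finset V → ℝ)
    (hsub : ∀ e (S T : Finset V), F e (S ∪ T) + F e (S ∩ T) ≤ F e S + F e T)
    (hnn : ∀ e S, 0 ≤ F e S)
    (h0 : ∀ e, F e ∅ = 0) (hV : ∀ e, F e Finset.univ = 0)
    (f : E → (V → ℝ) → ℝ)
    (hf : ∀ e (x : V → ℝ), IsGreatest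
      {r : ℝ | ∃ w : V → ℝ,
        ((∀ S : Finset V, ∑ v ∈ S, w v ≤ F e S) ∧ ∑ v, w v = F e Finset.univ)
        ∧ r = ∑ v, x v * w v} (f e x))
    (b : V → ℝ) (xs : V → ℝ)
    (hmin : ∀ x : V → ℝ,
      2⁻¹ * (∑ e, (f e xs) ^ 2) - ∑ v, b v * xs v ≤
      2⁻¹ * (∑ e, (f e x) ^ 2) - ∑ v, b v * x v) :
    ∃ w : E → V → ℝ,
      (∀ e, ((∀ S : Finset V, ∑ v ∈ S, w e v ≤ F e S) ∧ ∑ v, w e v = F e Finset.univ)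
        ∧ ∑ v, xs v * w e v = f e xs) ∧
      (∀ v, ∑ e, f e xs * w e v = b v) :=
  minimizer_solves_laplacian_general F hnn hV f hf b xs hmin
end

section
/- Let D ⊆ 2^V be a distributive lattice (closed under union and intersection) with ∅, V ∈ D, and let H : D → ℝ be submodular. Let h be the Lovász extension of H, defined as h(x) = sup_{w ∈ B_D(H)} ⟨x, w⟩ where B_D(H) = { w : w(S) ≤ H(S) ∀S ∈ D, w(V) = H(V) }. Then the problems max_{w ∈ P_D(H)} −(1/2)‖w‖² and min_{x ∈ ℝ_+^V} h(x) + (1/2)‖x‖² have equal optimal values, where P_D(H) = { w : w(S) ≤ H(S) ∀S ∈ D }. Moreover, if w* is optimal for the first problem, then x* = −w* is optimal for the second, and vice versa. -/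
/-!
Every `w ∈ P_D(H)` is dominated by a base: raise the coordinates of `w` one at a time until
each lies in a tight set; by submodularity tight sets are closed under union, so `V` itself
becomes tight. Hence `h x ≥ ⟪x, w⟫` for `x ≥ 0`, and `⟪x, w⟫ + ½‖x‖² = -½‖w‖² + ½‖x + w‖²`
gives weak duality, with equality only when `x = -w`. The min-norm point `w*` of `P_D(H)` is
`≤ 0` (`P_D(H)` is a lower set) and satisfies `‖w*‖² ≤ ⟪w*, b⟫` on `P_D(H)` (`P_D(H)` is
convex), so `h (-w*) = -‖w*‖²` and `-w*` attains the bound; conversely, an optimal `x` attains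
the same value, hence equals `-w*`.
-/

open Filter Topology

section Polyhedra

variable {V : Type*}

def submodularPolyhedron (D : Set (Finset V)) (H : Finset V → ℝ) : Set (V → ℝ) :=
  {w | ∀ S ∈ D, ∑ v ∈ S, w v ≤ H S}

def IsTightSet (D : Set (Finset V)) (H : Finset V → ℝ) (w : V → ℝ) (S : Finset V) : Prop :=
  S ∈ D ∧ ∑ v ∈ S, w v = H S

variable {D : Set (Finset V)} {H : Finset V → ℝ}

theorem isLowerSet_submodularPolyhedron : IsLowerSet (submodularPolyhedron D H) :=
  fun _ _ hle hw S hS => (Finset.sum_le_sum fun v _ => hle v).trans (hw S hS)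

theorem isClosed_submodularPolyhedron : IsClosed (submodularPolyhedron D H) := by
  simp only [submodularPolyhedron, Set.ofPred_forall]
  exact isClosed_iInter fun S => isClosed_iInter fun _ => isClosed_le (by fun_prop) continuous_const

theorem convex_submodularPolyhedron : Convex ℝ (submodularPolyhedron D H) := by
  intro w hw w' hw' a b ha hb hab S hS
  calc ∑ v ∈ S, (a • w + b • w') v = a * ∑ v ∈ S, w v + b * ∑ v ∈ S, w' v := by
        simp [Finset.sum_add_distrib, Finset.mul_sum]
    _ ≤ a * H S + b * H S := by gcongr <;> [exact hw S hS; exact hw' S hS]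
    _ = H S := by rw [← add_mul, hab, one_mul]

theorem IsTightSet.mono {w w' : V → ℝ} {S : Finset V} (h : IsTightSet D H w S) (hle : w ≤ w')
    (hw' : w' ∈ submodularPolyhedron D H) : IsTightSet D H w' S :=
  ⟨h.1, le_antisymm (hw' S h.1) (h.2 ▸ Finset.sum_le_sum fun v _ => hle v)⟩

theorem IsTightSet.union [DecidableEq V] (hDu : ∀ S T, S ∈ D → T ∈ D → S ∪ T ∈ D)
    (hDi : ∀ S T, S ∈ D → T ∈ D → S ∩ T ∈ D)
    (hsub : ∀ S T, S ∈ D → T ∈ D → H (S ∪ T) + H (S ∩ T) ≤ H S + H T)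
    {b : V → ℝ} {S T : Finset V} (hb : b ∈ submodularPolyhedron D H)
    (hS : IsTightSet D H b S) (hT : IsTightSet D H b T) : IsTightSet D H b (S ∪ T) := by
  refine ⟨hDu S T hS.1 hT.1, le_antisymm (hb _ (hDu S T hS.1 hT.1)) ?_⟩
  have hsplit := Finset.sum_union_inter (s₁ := S) (s₂ := T) (f := b)
  linarith [hsub S T hS.1 hT.1, hb _ (hDi S T hS.1 hT.1), hS.2, hT.2]

variable [Fintype V]

def basePolyhedron (D : Set (Finset V)) (H : Finset V → ℝ) : Set (V → ℝ) :=
  {w | w ∈ submodularPolyhedron D H ∧ ∑ v, w v = H Finset.univ}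

/-- Raise `w v` by the least slack `H S - w(S)` over the sets `S ∈ D` containing `v`. -/
theorem exists_le_isTightSet_mem (hDV : Finset.univ ∈ D) {w : V → ℝ}
    (hw : w ∈ submodularPolyhedron D H) (v : V) :
    ∃ w' ∈ submodularPolyhedron D H, w ≤ w' ∧ ∃ S, IsTightSet D H w' S ∧ v ∈ S := by
  classical
  let slack : Finset V → ℝ := fun S => H S - ∑ u ∈ S, w u
  obtain ⟨S₀, ⟨hS₀, hvS₀⟩, hmin⟩ := Set.exists_min_image {S | S ∈ D ∧ v ∈ S} slack
    (Set.toFinite _) ⟨Finset.univ, hDV, Finset.mem_univ v⟩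
  have hslack : 0 ≤ slack S₀ := sub_nonneg.2 (hw S₀ hS₀)
  have hsum : ∀ S : Finset V, ∑ u ∈ S, (w + Pi.single v (slack S₀) : V → ℝ) u
      = ∑ u ∈ S, w u + if v ∈ S then slack S₀ else 0 := fun S => by
    simp only [Pi.add_apply, Finset.sum_add_distrib, Finset.sum_pi_single']
  refine ⟨w + Pi.single v (slack S₀), fun S hS => ?_,
    le_add_of_nonneg_right (Pi.single_nonneg.2 hslack), S₀, ⟨hS₀, ?_⟩, hvS₀⟩
  · rw [hsum]
    split_ifs with hvS
    · linarith [hmin S ⟨hS, hvS⟩]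
    · simpa using hw S hS
  · rw [hsum, if_pos hvS₀]
    ring

theorem exists_le_forall_mem_isTightSet (hDV : Finset.univ ∈ D) {w : V → ℝ}
    (hw : w ∈ submodularPolyhedron D H) :
    ∃ b ∈ submodularPolyhedron D H, w ≤ b ∧ ∀ v, ∃ S, IsTightSet D H b S ∧ v ∈ S := by
  classical
  suffices ∀ A : Finset V, ∃ b ∈ submodularPolyhedron D H, w ≤ b ∧
      ∀ v ∈ A, ∃ S, IsTightSet D H b S ∧ v ∈ S by
    obtain ⟨b, hb, hwb, htight⟩ := this Finset.univ
    exact ⟨b, hb, hwb, fun v => htight v (Finset.mem_univ v)⟩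
  intro A
  induction A using Finset.induction_on with
  | empty => exact ⟨w, hw, le_rfl, by simp⟩
  | insert v A _ ih =>
    obtain ⟨b, hb, hwb, htight⟩ := ih
    obtain ⟨b', hb', hbb', S, hS, hvS⟩ := exists_le_isTightSet_mem hDV hb v
    refine ⟨b', hb', hwb.trans hbb', fun u hu => ?_⟩
    rcases Finset.mem_insert.1 hu with rfl | huA
    · exact ⟨S, hS, hvS⟩
    · obtain ⟨T, hT, huT⟩ := htight u huA
      exact ⟨T, hT.mono hbb' hb', huT⟩

theorem isTightSet_univ [Nonempty V] [DecidableEq V]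
    (hDu : ∀ S T, S ∈ D → T ∈ D → S ∪ T ∈ D) (hDi : ∀ S T, S ∈ D → T ∈ D → S ∩ T ∈ D)
    (hsub : ∀ S T, S ∈ D → T ∈ D → H (S ∪ T) + H (S ∩ T) ≤ H S + H T)
    {b : V → ℝ} (hb : b ∈ submodularPolyhedron D H)
    (h : ∀ v, ∃ S, IsTightSet D H b S ∧ v ∈ S) : IsTightSet D H b Finset.univ := by
  choose S hS hvS using h
  have hsup : IsTightSet D H b (Finset.univ.sup' Finset.univ_nonempty S) :=
    Finset.sup'_induction _ _ (fun _ h₁ _ h₂ => h₁.union hDu hDi hsub hb h₂) fun v _ => hS v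
  have hcover : Finset.univ.sup' Finset.univ_nonempty S = Finset.univ :=
    Finset.eq_univ_of_forall fun v => Finset.le_sup' S (Finset.mem_univ v) (hvS v)
  rwa [hcover] at hsup

theorem exists_mem_basePolyhedron_le [DecidableEq V]
    (hDu : ∀ S T, S ∈ D → T ∈ D → S ∪ T ∈ D) (hDi : ∀ S T, S ∈ D → T ∈ D → S ∩ T ∈ D)
    (hsub : ∀ S T, S ∈ D → T ∈ D → H (S ∪ T) + H (S ∩ T) ≤ H S + H T)
    (hDV : Finset.univ ∈ D) (hB : (basePolyhedron D H).Nonempty)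
    {w : V → ℝ} (hw : w ∈ submodularPolyhedron D H) : ∃ b ∈ basePolyhedron D H, w ≤ b := by
  cases isEmpty_or_nonempty V with
  | inl _ =>
    obtain ⟨b, hb⟩ := hB
    exact ⟨b, hb, fun v => isEmptyElim v⟩
  | inr _ =>
    obtain ⟨b, hb, hwb, htight⟩ := exists_le_forall_mem_isTightSet hDV hw
    exact ⟨b, ⟨hb, (isTightSet_univ hDu hDi hsub hb htight).2⟩, hwb⟩

end Polyhedra

section MinNormPoint

variable {V : Type*} [Fintype V] {s : Set (V → ℝ)}

theorem exists_isMinOn_sum_sq (hs : IsClosed s) (hne : s.Nonempty) :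
    ∃ w ∈ s, IsMinOn (fun w : V → ℝ => ∑ v, (w v) ^ 2) s w := by
  obtain ⟨w₀, hw₀⟩ := hne
  have hnorm : ∀ w : V → ℝ, ‖w‖ ^ 2 ≤ ∑ v, (w v) ^ 2 := fun w => by
    refine pow_le_pow_left₀ (norm_nonneg w) ?_ 2 |>.trans (Real.sq_sqrt ?_).le
    · refine (pi_norm_le_iff_of_nonneg (Real.sqrt_nonneg _)).2 fun v => Real.abs_le_sqrt ?_
      exact Finset.single_le_sum (fun u _ => sq_nonneg (w u)) (Finset.mem_univ v)
    · exact Finset.sum_nonneg fun v _ => sq_nonneg (w v)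
  have htendsto : Tendsto (fun w : V → ℝ => ∑ v, (w v) ^ 2) (cocompact _) atTop :=
    tendsto_atTop_mono hnorm <| (tendsto_pow_atTop two_ne_zero).comp tendsto_norm_cocompact_atTop
  exact (by fun_prop : Continuous fun w : V → ℝ => ∑ v, (w v) ^ 2).continuousOn.exists_isMinOn'
    hs hw₀ (htendsto.eventually_ge_atTop _ |>.filter_mono inf_le_left)

theorem nonpos_of_isMinOn_sum_sq (hs : IsLowerSet s) {w : V → ℝ} (hw : w ∈ s)
    (hmin : IsMinOn (fun w : V → ℝ => ∑ v, (w v) ^ 2) s w) : w ≤ 0 := by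
  intro v
  rw [Pi.zero_apply]
  by_contra! hpos
  have hle : ∀ u, (min (w u) 0) ^ 2 ≤ (w u) ^ 2 := fun u => by
    rcases le_total (w u) 0 with h | h <;> simp [h]
  have hlt : ∑ u, (min (w u) 0) ^ 2 < ∑ u, (w u) ^ 2 :=
    Finset.sum_lt_sum (fun u _ => hle u)
      ⟨v, Finset.mem_univ v, by rw [min_eq_right hpos.le]; nlinarith⟩
  exact hlt.not_ge (hmin (hs inf_le_left hw))

theorem nonneg_of_forall_mem_Ioc_nonneg {a b : ℝ}
    (h : ∀ t ∈ Set.Ioc (0 : ℝ) 1, 0 ≤ a * t + b * t ^ 2) : 0 ≤ a := by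
  have hlim : Tendsto (fun t => a + b * t) (𝓝[>] 0) (𝓝 a) := by
    simpa using ((by fun_prop : Continuous fun t : ℝ => a + b * t).tendsto 0).mono_left
      nhdsWithin_le_nhds
  refine ge_of_tendsto hlim ?_
  filter_upwards [Ioc_mem_nhdsGT one_pos] with t ht
  nlinarith [h t ht, ht.1]

theorem sum_sq_le_sum_mul_of_isMinOn (hs : Convex ℝ s) {w b : V → ℝ} (hw : w ∈ s) (hb : b ∈ s)
    (hmin : IsMinOn (fun w : V → ℝ => ∑ v, (w v) ^ 2) s w) :
    ∑ v, (w v) ^ 2 ≤ ∑ v, w v * b v := by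
  rw [← sub_nonneg]
  refine nonneg_of_forall_mem_Ioc_nonneg (b := 2⁻¹ * ∑ v, (b v - w v) ^ 2) fun t ht => ?_
  have hmem := hs.add_smul_sub_mem hw hb (Set.Ioc_subset_Icc_self ht)
  have hexpand : ∑ v, ((w + t • (b - w)) v) ^ 2 = ∑ v, (w v) ^ 2
      + (2 * (∑ v, w v * b v - ∑ v, (w v) ^ 2) * t + (∑ v, (b v - w v) ^ 2) * t ^ 2) := by
    simp only [Pi.add_apply, Pi.smul_apply, Pi.sub_apply, smul_eq_mul, Finset.mul_sum,
      Finset.sum_mul, ← Finset.sum_sub_distrib, ← Finset.sum_add_distrib]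
    exact Finset.sum_congr rfl fun v _ => by ring
  have hle : ∑ v, (w v) ^ 2 ≤ ∑ v, ((w + t • (b - w)) v) ^ 2 := hmin hmem
  linarith

end MinNormPoint

section Lovasz

variable {V : Type*} [Fintype V]

noncomputable def lovaszExtension (D : Set (Finset V)) (H : Finset V → ℝ) (x : V → ℝ) : EReal :=
  ⨆ w ∈ basePolyhedron D H, ((∑ v, x v * w v : ℝ) : EReal)

noncomputable def regularizedLovasz (D : Set (Finset V)) (H : Finset V → ℝ) (x : V → ℝ) :
    EReal :=
  lovaszExtension D H x + ((2⁻¹ * ∑ v, (x v) ^ 2 : ℝ) : EReal)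

variable {D : Set (Finset V)} {H : Finset V → ℝ}

theorem lovaszExtension_le_coe {x : V → ℝ} {c : ℝ}
    (h : ∀ b ∈ basePolyhedron D H, ∑ v, x v * b v ≤ c) : lovaszExtension D H x ≤ c :=
  iSup₂_le fun b hb => EReal.coe_le_coe_iff.2 (h b hb)

theorem coe_sum_mul_le_lovaszExtension
    (hdom : ∀ w ∈ submodularPolyhedron D H, ∃ b ∈ basePolyhedron D H, w ≤ b)
    {x w : V → ℝ} (hx : 0 ≤ x) (hw : w ∈ submodularPolyhedron D H) :
    ((∑ v, x v * w v : ℝ) : EReal) ≤ lovaszExtension D H x := by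
  obtain ⟨b, hb, hwb⟩ := hdom w hw
  calc ((∑ v, x v * w v : ℝ) : EReal) ≤ ((∑ v, x v * b v : ℝ) : EReal) :=
        EReal.coe_le_coe_iff.2 <|
          Finset.sum_le_sum fun v _ => mul_le_mul_of_nonneg_left (hwb v) (hx v)
    _ ≤ lovaszExtension D H x :=
        le_iSup₂ (f := fun b (_ : b ∈ basePolyhedron D H) => ((∑ v, x v * b v : ℝ) : EReal)) b hb

theorem coe_le_regularizedLovasz
    (hdom : ∀ w ∈ submodularPolyhedron D H, ∃ b ∈ basePolyhedron D H, w ≤ b)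
    {x w : V → ℝ} (hx : 0 ≤ x) (hw : w ∈ submodularPolyhedron D H) :
    ((-(2⁻¹ * ∑ v, (w v) ^ 2) + 2⁻¹ * ∑ v, (x v + w v) ^ 2 : ℝ) : EReal)
      ≤ regularizedLovasz D H x := by
  have hsq : -(2⁻¹ * ∑ v, (w v) ^ 2) + 2⁻¹ * ∑ v, (x v + w v) ^ 2
      = ∑ v, x v * w v + 2⁻¹ * ∑ v, (x v) ^ 2 := by
    simp only [add_sq, Finset.sum_add_distrib, mul_assoc, ← Finset.mul_sum]
    ring
  rw [hsq, EReal.coe_add, regularizedLovasz]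
  gcongr
  exact coe_sum_mul_le_lovaszExtension hdom hx hw

theorem neg_half_sum_sq_le_regularizedLovasz
    (hdom : ∀ w ∈ submodularPolyhedron D H, ∃ b ∈ basePolyhedron D H, w ≤ b)
    {x w : V → ℝ} (hx : 0 ≤ x) (hw : w ∈ submodularPolyhedron D H) :
    ((-(2⁻¹ * ∑ v, (w v) ^ 2) : ℝ) : EReal) ≤ regularizedLovasz D H x := by
  refine le_trans (EReal.coe_le_coe_iff.2 ?_) (coe_le_regularizedLovasz hdom hx hw)
  have : 0 ≤ ∑ v, (x v + w v) ^ 2 := Finset.sum_nonneg fun v _ => sq_nonneg _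
  linarith

theorem eq_neg_of_regularizedLovasz_le
    (hdom : ∀ w ∈ submodularPolyhedron D H, ∃ b ∈ basePolyhedron D H, w ≤ b)
    {x w : V → ℝ} (hx : 0 ≤ x) (hw : w ∈ submodularPolyhedron D H)
    (h : regularizedLovasz D H x ≤ ((-(2⁻¹ * ∑ v, (w v) ^ 2) : ℝ) : EReal)) : x = -w := by
  have hle := EReal.coe_le_coe_iff.1 ((coe_le_regularizedLovasz hdom hx hw).trans h)
  have hzero : ∑ v, (x v + w v) ^ 2 = 0 :=
    le_antisymm (by linarith) (Finset.sum_nonneg fun v _ => sq_nonneg _)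
  funext v
  have := (Finset.sum_eq_zero_iff_of_nonneg fun u _ => sq_nonneg (x u + w u)).1 hzero v
    (Finset.mem_univ v)
  rw [Pi.neg_apply]
  linarith [pow_eq_zero_iff two_ne_zero |>.1 this]

theorem regularizedLovasz_neg_of_isMinOn
    (hdom : ∀ w ∈ submodularPolyhedron D H, ∃ b ∈ basePolyhedron D H, w ≤ b)
    {w : V → ℝ} (hw : w ∈ submodularPolyhedron D H)
    (hmin : IsMinOn (fun w : V → ℝ => ∑ v, (w v) ^ 2) (submodularPolyhedron D H) w) :
    regularizedLovasz D H (-w) = ((-(2⁻¹ * ∑ v, (w v) ^ 2) : ℝ) : EReal) := by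
  have hneg : ∀ y : V → ℝ, ∑ v, (-w) v * y v = -∑ v, w v * y v := fun y => by
    simp [Finset.sum_neg_distrib]
  have hlovasz : lovaszExtension D H (-w) = ((-∑ v, (w v) ^ 2 : ℝ) : EReal) := by
    refine le_antisymm (lovaszExtension_le_coe fun b hb => ?_) ?_
    · rw [hneg]
      exact neg_le_neg <| sum_sq_le_sum_mul_of_isMinOn convex_submodularPolyhedron hw hb.1 hmin
    · have := coe_sum_mul_le_lovaszExtension hdom
        (neg_nonneg.2 (nonpos_of_isMinOn_sum_sq isLowerSet_submodularPolyhedron hw hmin)) hw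
      simpa only [hneg, sq] using this
  rw [regularizedLovasz, hlovasz, ← EReal.coe_add, EReal.coe_eq_coe_iff]
  simp only [Pi.neg_apply, neg_sq]
  ring

end Lovasz

theorem minnorm_regularizedLovasz_duality_general {V : Type*} [Fintype V] [DecidableEq V]
    (D : Set (Finset V)) (hDV : Finset.univ ∈ D)
    (hDu : ∀ S T, S ∈ D → T ∈ D → S ∪ T ∈ D)
    (hDi : ∀ S T, S ∈ D → T ∈ D → S ∩ T ∈ D)
    (H : Finset V → ℝ)
    (hsub : ∀ S T, S ∈ D → T ∈ D → H (S ∪ T) + H (S ∩ T) ≤ H S + H T)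
    (hB : ∃ w : V → ℝ, (∀ S ∈ D, ∑ v ∈ S, w v ≤ H S) ∧ ∑ v, w v = H Finset.univ) :
    let P : Set (V → ℝ) := {w | ∀ S ∈ D, ∑ v ∈ S, w v ≤ H S}
    let B : Set (V → ℝ) :=
      {w | (∀ S ∈ D, ∑ v ∈ S, w v ≤ H S) ∧ ∑ v, w v = H Finset.univ}
    let h : (V → ℝ) → EReal := fun x => ⨆ w ∈ B, ((∑ v, x v * w v : ℝ) : EReal)
    let obj : (V → ℝ) → EReal := fun x => h x + ((2⁻¹ * ∑ v, (x v) ^ 2 : ℝ) : EReal)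
    (∀ w : V → ℝ,
      (w ∈ P ∧ ∀ w' ∈ P, -(2⁻¹ * ∑ v, (w' v) ^ 2) ≤ -(2⁻¹ * ∑ v, (w v) ^ 2)) →
      ((∀ v, 0 ≤ (-w) v) ∧ (∀ x : V → ℝ, (∀ v, 0 ≤ x v) → obj (-w) ≤ obj x)) ∧
      obj (-w) = ((-(2⁻¹ * ∑ v, (w v) ^ 2) : ℝ) : EReal)) ∧
    (∀ x : V → ℝ,
      ((∀ v, 0 ≤ x v) ∧ (∀ x' : V → ℝ, (∀ v, 0 ≤ x' v) → obj x ≤ obj x')) →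
      ((-x) ∈ P ∧ (∀ w' ∈ P, -(2⁻¹ * ∑ v, (w' v) ^ 2) ≤ -(2⁻¹ * ∑ v, ((-x) v) ^ 2))) ∧
      obj x = ((-(2⁻¹ * ∑ v, ((-x) v) ^ 2) : ℝ) : EReal)) := by
  intro P B h obj
  have hdom : ∀ w ∈ P, ∃ b ∈ B, w ≤ b := fun w hw =>
    exists_mem_basePolyhedron_le hDu hDi hsub hDV hB hw
  have primal : ∀ w, (w ∈ P ∧ ∀ w' ∈ P, -(2⁻¹ * ∑ v, (w' v) ^ 2) ≤ -(2⁻¹ * ∑ v, (w v) ^ 2)) →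
      ((∀ v, 0 ≤ (-w) v) ∧ (∀ x : V → ℝ, (∀ v, 0 ≤ x v) → obj (-w) ≤ obj x)) ∧
      obj (-w) = ((-(2⁻¹ * ∑ v, (w v) ^ 2) : ℝ) : EReal) := by
    rintro w ⟨hw, hopt⟩
    have hmin : IsMinOn (fun w : V → ℝ => ∑ v, (w v) ^ 2) P w := fun w' hw' =>
      show ∑ v, (w v) ^ 2 ≤ ∑ v, (w' v) ^ 2 by linarith [hopt w' hw']
    have hval := regularizedLovasz_neg_of_isMinOn hdom hw hmin
    exact ⟨⟨neg_nonneg.2 (nonpos_of_isMinOn_sum_sq isLowerSet_submodularPolyhedron hw hmin),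
      fun x hx => hval.trans_le (neg_half_sum_sq_le_regularizedLovasz hdom hx hw)⟩, hval⟩
  refine ⟨primal, ?_⟩
  rintro x ⟨hx, hopt⟩
  obtain ⟨w, hw, hmin⟩ :=
    exists_isMinOn_sum_sq isClosed_submodularPolyhedron (hB.imp fun _ => And.left)
  have hwopt : w ∈ P ∧ ∀ w' ∈ P, -(2⁻¹ * ∑ v, (w' v) ^ 2) ≤ -(2⁻¹ * ∑ v, (w v) ^ 2) :=
    ⟨hw, fun w' hw' => by linarith [show ∑ v, (w v) ^ 2 ≤ ∑ v, (w' v) ^ 2 from hmin hw']⟩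
  obtain ⟨⟨hw_nonneg, -⟩, hval⟩ := primal w hwopt
  obtain rfl : x = -w :=
    eq_neg_of_regularizedLovasz_le hdom hx hw ((hopt _ hw_nonneg).trans hval.le)
  rw [neg_neg]
  exact ⟨hwopt, hval⟩

/-- Duality between the minimum-norm-point problem `max_{w ∈ P_D(H)} −(1/2)‖w‖²`
and the regularized Lovász extension minimization `min_{x ≥ 0} h(x) + (1/2)‖x‖²`:
optimal values coincide, and `w*` is optimal for the first iff `x* = −w*` is
optimal for the second. -/
theorem minnorm_regularizedLovasz_duality {V : Type*} [Fintype V] [DecidableEq V]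
    (D : Set (Finset V)) (hD0 : ∅ ∈ D) (hDV : Finset.univ ∈ D)
    (hDu : ∀ S T, S ∈ D → T ∈ D → S ∪ T ∈ D)
    (hDi : ∀ S T, S ∈ D → T ∈ D → S ∩ T ∈ D)
    (H : Finset V → ℝ)
    (hsub : ∀ S T, S ∈ D → T ∈ D → H (S ∪ T) + H (S ∩ T) ≤ H S + H T)
    (hB : ∃ w : V → ℝ, (∀ S ∈ D, ∑ v ∈ S, w v ≤ H S) ∧ ∑ v, w v = H Finset.univ) :
    let P : Set (V → ℝ) := {w | ∀ S ∈ D, ∑ v ∈ S, w v ≤ H S}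
    let B : Set (V → ℝ) :=
      {w | (∀ S ∈ D, ∑ v ∈ S, w v ≤ H S) ∧ ∑ v, w v = H Finset.univ}
    let h : (V → ℝ) → EReal := fun x => ⨆ w ∈ B, ((∑ v, x v * w v : ℝ) : EReal)
    let obj : (V → ℝ) → EReal := fun x => h x + ((2⁻¹ * ∑ v, (x v) ^ 2 : ℝ) : EReal)
    (∀ w : V → ℝ,
      (w ∈ P ∧ ∀ w' ∈ P, -(2⁻¹ * ∑ v, (w' v) ^ 2) ≤ -(2⁻¹ * ∑ v, (w v) ^ 2)) →
      ((∀ v, 0 ≤ (-w) v) ∧ (∀ x : V → ℝ, (∀ v, 0 ≤ x v) → obj (-w) ≤ obj x)) ∧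
      obj (-w) = ((-(2⁻¹ * ∑ v, (w v) ^ 2) : ℝ) : EReal)) ∧
    (∀ x : V → ℝ,
      ((∀ v, 0 ≤ x v) ∧ (∀ x' : V → ℝ, (∀ v, 0 ≤ x' v) → obj x ≤ obj x')) →
      ((-x) ∈ P ∧ (∀ w' ∈ P, -(2⁻¹ * ∑ v, (w' v) ^ 2) ≤ -(2⁻¹ * ∑ v, ((-x) v) ^ 2))) ∧
      obj x = ((-(2⁻¹ * ∑ v, ((-x) v) ^ 2) : ℝ) : EReal)) :=
  minnorm_regularizedLovasz_duality_general D hDV hDu hDi H hsub hB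
end

section
/- Let D ⊆ 2^V be a distributive lattice with ∅, V ∈ D and H : D → ℝ submodular with H(∅) = 0. For α ∈ ℝ, let A^α be the maximal minimizer of S ↦ H(S) + α|S| over D. Define z ∈ ℝ_+^V by z(v) = max{ sup{ α : v ∈ A^α }, 0 }. Then z minimizes h(x) + (1/2)‖x‖² over x ∈ ℝ_+^V, where h is the Lovász extension of H. -/
/-!
For `α > 0` the maximal minimizer `A^α` lies between `{z > α}` and `{z ≥ α}`. Hence every strict
superlevel set `{z > γ}`, `γ ≥ 0`, belongs to `D` and minimizes `H + β|·|` for all `β` from `γ`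
up to the next value of `z`. Comparing consecutive superlevel sets via submodularity shows that
`-z` is dominated by `H` on the traces `S ∩ {z > γ}` and is tight on the sets `{z > γ}`, so Abel
summation gives `⟨z, w⟩ ≤ -‖z‖²` for every `w` in the submodular polyhedron.
Since `P = {z > 0}` minimizes `H`, the contraction `S ↦ H (S ∪ P) - H P` is nonnegative and has a
nonnegative base `w₀` (found by repeatedly peeling off the set of least average cost). Then
`w₀ - z` is a base of `H`, and `h x + ½‖x‖² ≥ ⟨x, w₀ - z⟩ + ½‖x‖² ≥ -½‖z‖² ≥ h z + ½‖z‖²`.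
-/

open Finset

section

variable {V : Type*}

theorem isMinOn_of_forall_mem_Ioo {D : Set (Finset V)} {H : Finset V → ℝ} {C : Finset V}
    {a b : ℝ} (hab : a < b) (h : ∀ α ∈ Set.Ioo a b, IsMinOn (fun S => H S + α * S.card) D C) :
    ∀ α ∈ Set.Icc a b, IsMinOn (fun S => H S + α * S.card) D C := by
  intro α hα
  refine isMinOn_iff.2 fun T hT => ?_
  have hclosed : IsClosed {α : ℝ | H C + α * C.card ≤ H T + α * T.card} :=
    isClosed_le (by fun_prop) (by fun_prop)
  refine closure_minimal (fun α' hα' => isMinOn_iff.1 (h α' hα') T hT) hclosed ?_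
  rwa [closure_Ioo hab.ne]

lemma Antitone.mem_of_lt_sSup {A : ℝ → Finset V} (hA : Antitone A) {v : V} {α : ℝ}
    (hne : ∃ β, v ∈ A β) (h : α < sSup {β | v ∈ A β}) : v ∈ A α := by
  obtain ⟨β, hβ, hαβ⟩ := exists_lt_of_lt_csSup hne h
  exact hA hαβ.le hβ

section StrictSuperlevel

variable [Fintype V]

noncomputable def strictSuperlevel (y : V → ℝ) (γ : ℝ) : Finset V := univ.filter (γ < y ·)

@[simp] lemma mem_strictSuperlevel {y : V → ℝ} {γ : ℝ} {v : V} :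
    v ∈ strictSuperlevel y γ ↔ γ < y v := by
  simp [strictSuperlevel]

lemma strictSuperlevel_anti (y : V → ℝ) : Antitone (strictSuperlevel y) :=
  fun _ _ hγβ _ hv => mem_strictSuperlevel.2 (hγβ.trans_lt (mem_strictSuperlevel.1 hv))

lemma strictSuperlevel_eq_empty {y : V → ℝ} {γ : ℝ} :
    strictSuperlevel y γ = ∅ ↔ ∀ v, y v ≤ γ := by
  simp [eq_empty_iff_forall_notMem]

/-- Downward induction over the finitely many values of `y`. -/
theorem strictSuperlevel_induction (y : V → ℝ) {p : ℝ → Prop}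
    (top : ∀ γ, (∀ v, y v ≤ γ) → p γ)
    (step : ∀ γ β, γ < β → (∀ v, y v ≤ γ ∨ β ≤ y v) → p β → p γ) (γ : ℝ) : p γ := by
  by_cases hall : ∀ v, y v ≤ γ
  · exact top γ hall
  push Not at hall
  obtain ⟨v₀, hv₀⟩ := hall
  obtain ⟨u, hu, hmin⟩ :=
    (strictSuperlevel y γ).exists_min_image y ⟨v₀, mem_strictSuperlevel.2 hv₀⟩
  have hgap : ∀ v, y v ≤ γ ∨ y u ≤ y v := fun v =>
    (le_or_gt (y v) γ).imp_right fun h => hmin v (mem_strictSuperlevel.2 h)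
  exact step γ (y u) (mem_strictSuperlevel.1 hu) hgap (strictSuperlevel_induction y top step (y u))
termination_by (strictSuperlevel y γ).card
decreasing_by
  exact card_lt_card <| (ssubset_iff_of_subset <| strictSuperlevel_anti y
    (mem_strictSuperlevel.1 hu).le).2 ⟨u, hu, by simp⟩

theorem exists_gap (y : V → ℝ) (γ : ℝ) : ∃ β, γ < β ∧ ∀ v, y v ≤ γ ∨ β ≤ y v :=
  strictSuperlevel_induction y (p := fun γ => ∃ β, γ < β ∧ ∀ v, y v ≤ γ ∨ β ≤ y v)
    (fun γ h => ⟨γ + 1, by linarith, fun v => .inl (h v)⟩)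
    (fun _ β hγβ hgap _ => ⟨β, hγβ, hgap⟩) γ

/-- Abel summation: `∑ y g = ∫₀^∞ g({y > γ}) dγ`. -/
theorem sum_mul_nonpos_of_sum_strictSuperlevel_nonpos {y g : V → ℝ} (hy : ∀ v, 0 ≤ y v)
    (hg : ∀ γ, 0 ≤ γ → ∑ v ∈ strictSuperlevel y γ, g v ≤ 0) : ∑ v, y v * g v ≤ 0 := by
  suffices ∀ γ, 0 ≤ γ → ∑ v, max (y v - γ) 0 * g v ≤ 0 by
    convert this 0 le_rfl using 3 with v
    rw [sub_zero, max_eq_left (hy v)]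
  refine strictSuperlevel_induction y (fun γ hγ _ => ?_) (fun γ β hγβ hgap ih hγ => ?_)
  · simp [max_eq_right (sub_nonpos.2 (hγ _))]
  have hsplit : ∑ v, max (y v - γ) 0 * g v
      = ∑ v, max (y v - β) 0 * g v + (β - γ) * ∑ v ∈ strictSuperlevel y γ, g v := by
    rw [strictSuperlevel, sum_filter, mul_sum, ← sum_add_distrib]
    refine sum_congr rfl fun v _ => ?_
    rcases hgap v with h | h
    · simp [h, not_lt.2 h, max_eq_right (sub_nonpos.2 (h.trans hγβ.le))]
    · rw [if_pos (hγβ.trans_le h), max_eq_left (by linarith), max_eq_left (by linarith)]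
      ring
  rw [hsplit]
  nlinarith [ih (hγ.trans hγβ.le), hg γ hγ]

end StrictSuperlevel

section Submodular

variable [DecidableEq V] {D : Set (Finset V)} {H : Finset V → ℝ}

def SubmodularOn (D : Set (Finset V)) (H : Finset V → ℝ) : Prop :=
  ∀ S T, S ∈ D → T ∈ D → H (S ∪ T) + H (S ∩ T) ≤ H S + H T

theorem SubmodularOn.le_add_card_sdiff (hsub : SubmodularOn D H) (hDu : SupClosed D)
    {X C : Finset V} {β : ℝ} (hX : X ∈ D) (hC : C ∈ D)
    (hmin : IsMinOn (fun S => H S + β * S.card) D C) :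
    H (X ∩ C) ≤ H X + β * (X \ C).card := by
  have hcard : ((X \ C).card : ℝ) + C.card = (X ∪ C).card := by
    exact_mod_cast card_sdiff_add_card X C
  have hCmin := isMinOn_iff.1 hmin (X ∪ C) (hDu hX hC)
  rw [← hcard, mul_add] at hCmin
  linarith [hsub X C hX hC]

theorem SubmodularOn.sub_mul_card_sdiff (hsub : SubmodularOn D H) (c : ℝ) (P : Finset V) :
    SubmodularOn D fun S => H S - c * (S \ P).card := by
  intro S T hS hT
  have hcard : (((S ∪ T) \ P).card : ℝ) + ((S ∩ T) \ P).card = (S \ P).card + (T \ P).card := by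
    have hinter : (S ∩ T) \ P = (S \ P) ∩ (T \ P) := by ext; simp; tauto
    rw [union_sdiff_distrib, hinter]
    exact_mod_cast card_union_add_card_inter _ _
  dsimp only
  linear_combination hsub S T hS hT - c * hcard

theorem SubmodularOn.antitone_of_isGreatest {A : ℝ → Finset V} (hsub : SubmodularOn D H)
    (hDu : SupClosed D) (hDi : InfClosed D)
    (hA : ∀ α, IsGreatest {S | S ∈ D ∧ IsMinOn (fun T => H T + α * T.card) D S} (A α)) :
    Antitone A := by
  intro α β hαβ
  obtain ⟨⟨hαD, hαmin⟩, hαmax⟩ := hA α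
  obtain ⟨⟨hβD, hβmin⟩, -⟩ := hA β
  have hcard : ((A α ∪ A β).card : ℝ) = (A α).card + (A β).card - (A α ∩ A β).card := by
    rw [eq_sub_iff_add_eq]
    exact_mod_cast card_union_add_card_inter _ _
  have hcard_le : ((A α ∩ A β).card : ℝ) ≤ (A β).card := by
    exact_mod_cast card_le_card inter_subset_right
  have hβ := isMinOn_iff.1 hβmin (A α ∩ A β) (hDi hαD hβD)
  have hunion : IsMinOn (fun T => H T + α * T.card) D (A α ∪ A β) := by
    refine isMinOn_iff.2 fun T hT => le_trans ?_ (isMinOn_iff.1 hαmin T hT)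
    simp only [hcard]
    nlinarith [hsub _ _ hαD hβD, mul_nonneg (sub_nonneg.2 hαβ) (sub_nonneg.2 hcard_le)]
  exact subset_union_right.trans (hαmax ⟨hDu hαD hβD, hunion⟩)

lemma sum_ite_mem_zero_eq_mul_card_sdiff (S P : Finset V) (c : ℝ) :
    ∑ v ∈ S, (if v ∈ P then 0 else c) = c * (S \ P).card := by
  rw [sum_ite, sum_const_zero, zero_add, sum_const, nsmul_eq_mul, mul_comm, filter_not,
    filter_mem_eq_inter, sdiff_inter_self_left]

theorem exists_ssuperset_min_ratio [Fintype V] {P : Finset V} (huniv : univ ∈ D)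
    (hPu : P ≠ univ) (hpos : ∀ S ∈ D, P ⊆ S → 0 ≤ H S) :
    ∃ T ∈ D, P ⊂ T ∧ ∃ ε, 0 ≤ ε ∧ (∀ S ∈ D, P ⊆ S → ε * (S \ P).card ≤ H S) ∧
      ε * (T \ P).card = H T := by
  classical
  have hcard_pos : ∀ {S : Finset V}, P ⊂ S → (0 : ℝ) < (S \ P).card := fun hPS => by
    exact_mod_cast card_pos.2 (sdiff_nonempty.2 fun h => hPS.not_subset h)
  obtain ⟨T, hT, hTmin⟩ := (univ.filter fun S => S ∈ D ∧ P ⊂ S).exists_min_image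
    (fun S => H S / (S \ P).card) ⟨univ, by simpa [ssubset_univ_iff] using ⟨huniv, hPu⟩⟩
  obtain ⟨hTD, hPT⟩ := (mem_filter.1 hT).2
  refine ⟨T, hTD, hPT, H T / (T \ P).card, div_nonneg (hpos T hTD hPT.subset) (Nat.cast_nonneg _),
    fun S hS hPS => ?_, div_mul_cancel₀ _ (hcard_pos hPT).ne'⟩
  obtain rfl | hPS := hPS.eq_or_ssubset
  · simpa using hpos _ hS le_rfl
  exact (le_div_iff₀ (hcard_pos hPS)).1 (hTmin S (by simp [hS, hPS]))

theorem SubmodularOn.exists_nonneg_base [Fintype V] {H : Finset V → ℝ} (hsub : SubmodularOn D H)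
    (hDu : SupClosed D) (hDi : InfClosed D) (huniv : univ ∈ D) {P : Finset V} (hP : P ∈ D)
    (hHP : H P = 0) (hpos : ∀ S ∈ D, P ⊆ S → 0 ≤ H S) :
    ∃ w : V → ℝ, (∀ v, 0 ≤ w v) ∧ (∀ v ∈ P, w v = 0) ∧
      (∀ S ∈ D, P ⊆ S → ∑ v ∈ S, w v ≤ H S) ∧ ∑ v, w v = H univ := by
  by_cases hPu : P = univ
  · subst hPu
    refine ⟨0, fun _ => le_rfl, fun _ _ => rfl, fun S hS hPS => ?_, by simp [hHP]⟩
    simp [univ_subset_iff.1 hPS, hHP]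
  obtain ⟨T, hT, hPT, ε, hε, hεle, hεT⟩ := exists_ssuperset_min_ratio huniv hPu hpos
  set H₂ : Finset V → ℝ := fun S => H S - ε * (S \ P).card
  have hsub₂ : SubmodularOn D H₂ := hsub.sub_mul_card_sdiff ε P
  have hH₂T : H₂ T = 0 := by simp [H₂, hεT]
  have hH₂pos : ∀ S ∈ D, P ⊆ S → 0 ≤ H₂ S := fun S hS hPS => sub_nonneg.2 (hεle S hS hPS)
  obtain ⟨w₁, hw₁, hw₁T, hw₁le, hw₁univ⟩ :=
    hsub₂.exists_nonneg_base hDu hDi huniv hT hH₂T fun S hS hTS =>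
      hH₂pos S hS (hPT.subset.trans hTS)
  refine ⟨fun v => w₁ v + if v ∈ P then 0 else ε, fun v => ?_, fun v hv => ?_,
    fun S hS hPS => ?_, ?_⟩
  · exact add_nonneg (hw₁ v) (by split_ifs <;> simp [hε])
  · simp [hw₁T v (hPT.subset hv), hv]
  · have hST : ∑ v ∈ S, w₁ v = ∑ v ∈ S ∪ T, w₁ v :=
      sum_subset subset_union_left fun v hv hvS => hw₁T v (by simpa [hvS] using hv)
    have h₂ : H₂ (S ∪ T) ≤ H₂ S := by
      linarith [hsub₂ S T hS hT, hH₂pos (S ∩ T) (hDi hS hT) (subset_inter hPS hPT.subset)]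
    rw [sum_add_distrib, sum_ite_mem_zero_eq_mul_card_sdiff, hST]
    linarith [hw₁le (S ∪ T) (hDu hS hT) subset_union_right]
  · rw [sum_add_distrib, sum_ite_mem_zero_eq_mul_card_sdiff, hw₁univ]
    simp [H₂]
termination_by Fintype.card V - P.card
decreasing_by
  have := card_le_univ T
  have := card_lt_card hPT
  omega

end Submodular

section Staircase

variable [Fintype V] [DecidableEq V] {D : Set (Finset V)} {H : Finset V → ℝ} {y : V → ℝ}

def StrictSuperlevelsMinimize (D : Set (Finset V)) (H : Finset V → ℝ) (y : V → ℝ) : Prop :=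
  ∀ γ β, 0 ≤ γ → γ ≤ β → (∀ v, y v ≤ γ ∨ β ≤ y v) →
    strictSuperlevel y γ ∈ D ∧ IsMinOn (fun S => H S + β * S.card) D (strictSuperlevel y γ)

lemma sum_eq_sum_inter_strictSuperlevel_add {γ β : ℝ} (hgap : ∀ v, y v ≤ γ ∨ β ≤ y v)
    {X : Finset V} (hX : X ⊆ strictSuperlevel y γ) :
    ∑ v ∈ X, y v = ∑ v ∈ X ∩ strictSuperlevel y β, y v + β * (X \ strictSuperlevel y β).card := by
  rw [← sum_inter_add_sum_sdiff X (strictSuperlevel y β) y, ← nsmul_eq_mul', ← sum_const]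
  refine congrArg _ (sum_congr rfl fun v hv => ?_)
  obtain ⟨hvX, hvβ⟩ := mem_sdiff.1 hv
  have hγv := mem_strictSuperlevel.1 (hX hvX)
  exact le_antisymm (not_lt.1 (mt mem_strictSuperlevel.2 hvβ)) ((hgap v).resolve_left hγv.not_ge)

theorem StrictSuperlevelsMinimize.neg_sum_le (hy : StrictSuperlevelsMinimize D H y)
    (hsub : SubmodularOn D H) (hDu : SupClosed D) (hDi : InfClosed D) (hH0 : H ∅ = 0) :
    ∀ γ, 0 ≤ γ → (∀ S ∈ D, -∑ v ∈ S ∩ strictSuperlevel y γ, y v ≤ H (S ∩ strictSuperlevel y γ)) ∧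
      H (strictSuperlevel y γ) = -∑ v ∈ strictSuperlevel y γ, y v := by
  refine strictSuperlevel_induction y (fun γ htop _ => ?_) (fun γ β hγβ hgap ih hγ => ?_)
  · simp [strictSuperlevel_eq_empty.2 htop, hH0]
  obtain ⟨hfeas, htight⟩ := ih (hγ.trans hγβ.le)
  obtain ⟨hCγ, hminγ⟩ := hy γ β hγ hγβ.le hgap
  obtain ⟨hCβ, hminβ⟩ := hy β β (hγ.trans hγβ.le) le_rfl fun v => le_total _ _
  have hsub' := strictSuperlevel_anti y hγβ.le
  have feas : ∀ S ∈ D, -∑ v ∈ S ∩ strictSuperlevel y γ, y v ≤ H (S ∩ strictSuperlevel y γ) := by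
    intro S hS
    have hXC : S ∩ strictSuperlevel y γ ∩ strictSuperlevel y β = S ∩ strictSuperlevel y β := by
      rw [inter_assoc, inter_eq_right.2 hsub']
    have hexch :=
      hsub.le_add_card_sdiff (X := S ∩ strictSuperlevel y γ) hDu (hDi hS hCγ) hCβ hminβ
    rw [hXC] at hexch
    rw [sum_eq_sum_inter_strictSuperlevel_add hgap inter_subset_right, hXC]
    linarith [hfeas S hS]
  refine ⟨feas, le_antisymm ?_ (by simpa using feas _ hCγ)⟩
  have hmin := isMinOn_iff.1 hminγ _ hCβ
  have hcard : ((strictSuperlevel y γ \ strictSuperlevel y β).card : ℝ) +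
      (strictSuperlevel y β).card = (strictSuperlevel y γ).card := by
    exact_mod_cast card_sdiff_add_card_eq_card hsub'
  rw [sum_eq_sum_inter_strictSuperlevel_add hgap subset_rfl, inter_eq_right.2 hsub']
  rw [← hcard, mul_add] at hmin
  linarith

theorem StrictSuperlevelsMinimize.sum_mul_le (hy : StrictSuperlevelsMinimize D H y)
    (hy0 : ∀ v, 0 ≤ y v) (hsub : SubmodularOn D H) (hDu : SupClosed D) (hDi : InfClosed D)
    (hH0 : H ∅ = 0) {w : V → ℝ} (hw : ∀ S ∈ D, ∑ v ∈ S, w v ≤ H S) :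
    ∑ v, y v * w v ≤ -∑ v, y v ^ 2 := by
  have key : ∑ v, y v * (w v + y v) ≤ 0 := by
    refine sum_mul_nonpos_of_sum_strictSuperlevel_nonpos hy0 fun γ hγ => ?_
    have htight := (hy.neg_sum_le hsub hDu hDi hH0 γ hγ).2
    rw [sum_add_distrib]
    linarith [hw _ (hy γ γ hγ le_rfl fun v => le_total _ _).1]
  simp only [mul_add, sum_add_distrib, ← sq] at key
  linarith

theorem StrictSuperlevelsMinimize.exists_nonneg_sub_mem_base
    (hy : StrictSuperlevelsMinimize D H y) (hy0 : ∀ v, 0 ≤ y v) (hsub : SubmodularOn D H)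
    (hDu : SupClosed D) (hDi : InfClosed D) (huniv : univ ∈ D) (hH0 : H ∅ = 0) :
    ∃ w₀ : V → ℝ, (∀ v, 0 ≤ w₀ v) ∧ (∀ S ∈ D, ∑ v ∈ S, (w₀ v - y v) ≤ H S) ∧
      ∑ v, (w₀ v - y v) = H univ := by
  set P := strictSuperlevel y 0
  obtain ⟨hfeas, htight⟩ := hy.neg_sum_le hsub hDu hDi hH0 0 le_rfl
  obtain ⟨hP, hPmin⟩ := hy 0 0 le_rfl le_rfl fun v => le_total _ _
  obtain ⟨w₀, hw₀, hw₀P, hw₀le, hw₀univ⟩ :=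
    SubmodularOn.exists_nonneg_base (H := fun S => H S - H P)
      (fun S T hS hT => by linarith [hsub S T hS hT]) hDu hDi huniv hP (sub_self _)
      fun S hS _ => by simpa using isMinOn_iff.1 hPmin S hS
  have hy_sum : ∀ S, ∑ v ∈ S, y v = ∑ v ∈ S ∩ P, y v := fun S =>
    (sum_subset inter_subset_left fun v hvS hvP =>
      le_antisymm (not_lt.1 fun h => hvP (by simp [P, hvS, h])) (hy0 v)).symm
  have hw₀_sum : ∀ S, ∑ v ∈ S, w₀ v = ∑ v ∈ S ∪ P, w₀ v := fun S =>
    sum_subset subset_union_left fun v hv hvS => hw₀P v ((mem_union.1 hv).resolve_left hvS)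
  refine ⟨w₀, hw₀, fun S hS => ?_, ?_⟩
  · rw [sum_sub_distrib, hw₀_sum, hy_sum]
    linarith [hw₀le (S ∪ P) (hDu hS hP) subset_union_right, hfeas S hS, hsub S P hS hP]
  · rw [sum_sub_distrib, hw₀univ, hy_sum, univ_inter]
    linarith

end Staircase

section MaximalMinimizers

variable [Fintype V] {D : Set (Finset V)} {H : Finset V → ℝ} {A : ℝ → Finset V}

theorem exists_forall_mem_of_isGreatest (huniv : univ ∈ D)
    (hA : ∀ α, IsGreatest {S | S ∈ D ∧ IsMinOn (fun T => H T + α * T.card) D S} (A α)) :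
    ∃ α, ∀ v, v ∈ A α := by
  obtain ⟨c, hc⟩ := Finite.bddBelow_range fun T : Finset V => H T - H univ
  refine ⟨min c 0, fun v => (hA _).2 ⟨huniv, isMinOn_iff.2 fun T _ => ?_⟩ (mem_univ v)⟩
  have hcT : c ≤ H T - H univ := hc ⟨T, rfl⟩
  obtain rfl | hT := eq_or_ne T univ
  · exact le_rfl
  have hcard : (T.card : ℝ) + 1 ≤ (univ : Finset V).card := by
    exact_mod_cast card_lt_card (ssubset_univ_iff.2 hT)
  nlinarith [min_le_left c 0, min_le_right c 0]

theorem bddAbove_of_isGreatest (hD0 : ∅ ∈ D) (hH0 : H ∅ = 0)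
    (hA : ∀ α, IsGreatest {S | S ∈ D ∧ IsMinOn (fun T => H T + α * T.card) D S} (A α)) (v : V) :
    BddAbove {α | v ∈ A α} := by
  obtain ⟨c, hc⟩ := Finite.bddAbove_range fun T : Finset V => -H T
  refine ⟨max c 0, fun α hv => ?_⟩
  have hempty := isMinOn_iff.1 (hA α).1.2 ∅ hD0
  have hcA : -H (A α) ≤ c := hc ⟨A α, rfl⟩
  have hcard : (1 : ℝ) ≤ (A α).card := by exact_mod_cast card_pos.2 ⟨v, hv⟩
  simp only [hH0, card_empty, Nat.cast_zero, mul_zero, add_zero] at hempty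
  rcases le_or_gt α 0 with hα | hα
  · exact hα.trans (le_max_right c 0)
  · nlinarith [le_max_left c 0]

theorem strictSuperlevelsMinimize_of_isGreatest [DecidableEq V] (hsub : SubmodularOn D H)
    (hDu : SupClosed D) (hDi : InfClosed D) (hD0 : ∅ ∈ D) (huniv : univ ∈ D) (hH0 : H ∅ = 0)
    (hA : ∀ α, IsGreatest {S | S ∈ D ∧ IsMinOn (fun T => H T + α * T.card) D S} (A α))
    {z : V → ℝ} (hz : ∀ v, z v = max (sSup {α | v ∈ A α}) 0) :
    StrictSuperlevelsMinimize D H z := by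
  obtain ⟨α₀, hα₀⟩ := exists_forall_mem_of_isGreatest huniv hA
  have hlt : ∀ α v, 0 < α → α < z v → v ∈ A α := fun α v hα h =>
    (hsub.antitone_of_isGreatest hDu hDi hA).mem_of_lt_sSup ⟨α₀, hα₀ v⟩
      ((lt_max_iff.1 (hz v ▸ h)).resolve_right hα.not_gt)
  have hle : ∀ α v, v ∈ A α → α ≤ z v := fun α v hv =>
    (hz v).symm ▸ le_max_of_le_left (le_csSup (bddAbove_of_isGreatest hD0 hH0 hA v) hv)
  have hA_eq : ∀ γ β, 0 ≤ γ → (∀ v, z v ≤ γ ∨ β ≤ z v) →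
      ∀ α ∈ Set.Ioo γ β, A α = strictSuperlevel z γ := by
    intro γ β hγ hgap α ⟨hγα, hαβ⟩
    ext v
    rw [mem_strictSuperlevel]
    exact ⟨fun hv => hγα.trans_le (hle α v hv), fun hv =>
      hlt α v (hγ.trans_lt hγα) (hαβ.trans_le ((hgap v).resolve_left hv.not_ge))⟩
  intro γ β hγ hγβ hgap
  obtain ⟨β', hγβ', hgap'⟩ := exists_gap z γ
  have hgap_max : ∀ v, z v ≤ γ ∨ max β β' ≤ z v := fun v =>
    (le_or_gt (z v) γ).imp_right fun h =>
      max_le ((hgap v).resolve_left h.not_ge) ((hgap' v).resolve_left h.not_ge)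
  have hγ_max : γ < max β β' := lt_max_of_lt_right hγβ'
  have hmid : (γ + max β β') / 2 ∈ Set.Ioo γ (max β β') := ⟨by linarith, by linarith⟩
  refine ⟨hA_eq γ _ hγ hgap_max _ hmid ▸ (hA _).1.1, isMinOn_of_forall_mem_Ioo hγ_max
    (fun α hα => hA_eq γ _ hγ hgap_max α hα ▸ (hA α).1.2) β ⟨hγβ, le_max_left _ _⟩⟩

end MaximalMinimizers

lemma neg_half_sum_sq_le [Fintype V] {x w₀ z : V → ℝ} (hx : ∀ v, 0 ≤ x v)
    (hw₀ : ∀ v, 0 ≤ w₀ v) :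
    -∑ v, z v ^ 2 + 2⁻¹ * ∑ v, z v ^ 2 ≤ ∑ v, x v * (w₀ v - z v) + 2⁻¹ * ∑ v, x v ^ 2 := by
  rw [mul_sum, mul_sum, ← sum_neg_distrib, ← sum_add_distrib, ← sum_add_distrib]
  exact sum_le_sum fun v _ => by nlinarith [mul_nonneg (hx v) (hw₀ v), sq_nonneg (x v - z v)]

end

theorem threshold_vector_minimizes_general {V : Type*} [Fintype V] [DecidableEq V]
    (D : Set (Finset V)) (hD0 : ∅ ∈ D) (hDV : Finset.univ ∈ D)
    (hDu : ∀ S T, S ∈ D → T ∈ D → S ∪ T ∈ D)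
    (hDi : ∀ S T, S ∈ D → T ∈ D → S ∩ T ∈ D)
    (H : Finset V → ℝ) (hH0 : H ∅ = 0)
    (hsub : ∀ S T, S ∈ D → T ∈ D → H (S ∪ T) + H (S ∩ T) ≤ H S + H T)
    (A : ℝ → Finset V)
    (hAD : ∀ α, A α ∈ D)
    (hAmin : ∀ α, ∀ S ∈ D, H (A α) + α * (A α).card ≤ H S + α * S.card)
    (hAmax : ∀ α, ∀ S ∈ D,
      (∀ T ∈ D, H S + α * S.card ≤ H T + α * T.card) → S ⊆ A α)
    (z : V → ℝ) (hz : ∀ v, z v = max (sSup {α : ℝ | v ∈ A α}) 0) :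
    let B : Set (V → ℝ) :=
      {w | (∀ S ∈ D, ∑ v ∈ S, w v ≤ H S) ∧ ∑ v, w v = H Finset.univ}
    let h : (V → ℝ) → EReal := fun x => ⨆ w ∈ B, ((∑ v, x v * w v : ℝ) : EReal)
    let obj : (V → ℝ) → EReal := fun x => h x + ((2⁻¹ * ∑ v, (x v) ^ 2 : ℝ) : EReal)
    (∀ v, 0 ≤ z v) ∧ ∀ x : V → ℝ, (∀ v, 0 ≤ x v) → obj z ≤ obj x := by
  intro B h obj
  dsimp only [obj, h]
  have hDu' : SupClosed D := fun S hS T hT => hDu S T hS hT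
  have hDi' : InfClosed D := fun S hS T hT => hDi S T hS hT
  have hz0 : ∀ v, 0 ≤ z v := fun v => hz v ▸ le_max_right _ _
  have hlevels : StrictSuperlevelsMinimize D H z :=
    strictSuperlevelsMinimize_of_isGreatest hsub hDu' hDi' hD0 hDV hH0 (fun α =>
      ⟨⟨hAD α, isMinOn_iff.2 (hAmin α)⟩, fun S hS => hAmax α S hS.1 (isMinOn_iff.1 hS.2)⟩) hz
  obtain ⟨w₀, hw₀, hw₀B⟩ := hlevels.exists_nonneg_sub_mem_base hz0 hsub hDu' hDi' hDV hH0
  refine ⟨hz0, fun x hx => ?_⟩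
  calc _ ≤ ((-∑ v, z v ^ 2 : ℝ) : EReal) + ((2⁻¹ * ∑ v, z v ^ 2 : ℝ) : EReal) := by
        refine add_le_add_left (iSup₂_le fun w hw => ?_) _
        exact EReal.coe_le_coe_iff.2 (hlevels.sum_mul_le hz0 hsub hDu' hDi' hH0 hw.1)
    _ ≤ ((∑ v, x v * (w₀ v - z v) : ℝ) : EReal) + ((2⁻¹ * ∑ v, x v ^ 2 : ℝ) : EReal) := by
        rw [← EReal.coe_add, ← EReal.coe_add, EReal.coe_le_coe_iff]
        exact neg_half_sum_sq_le hx hw₀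
    _ ≤ _ := by
        gcongr
        exact le_iSup₂_of_le (fun v => w₀ v - z v) hw₀B le_rfl

/-- The vector `z(v) = max{ sup{α : v ∈ A^α}, 0 }` built from the maximal minimizers
`A^α` of `H(S) + α|S|` minimizes `h(x) + (1/2)‖x‖²` over the nonnegative orthant,
where `h` is the Lovász extension of `H`. -/
theorem threshold_vector_minimizes {V : Type*} [Fintype V] [DecidableEq V]
    (D : Set (Finset V)) (hD0 : ∅ ∈ D) (hDV : Finset.univ ∈ D)
    (hDu : ∀ S T, S ∈ D → T ∈ D → S ∪ T ∈ D)
    (hDi : ∀ S T, S ∈ D → T ∈ D → S ∩ T ∈ D)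
    (H : Finset V → ℝ) (hH0 : H ∅ = 0)
    (hsub : ∀ S T, S ∈ D → T ∈ D → H (S ∪ T) + H (S ∩ T) ≤ H S + H T)
    (hB : ∃ w : V → ℝ, (∀ S ∈ D, ∑ v ∈ S, w v ≤ H S) ∧ ∑ v, w v = H Finset.univ)
    (A : ℝ → Finset V)
    (hAD : ∀ α, A α ∈ D)
    (hAmin : ∀ α, ∀ S ∈ D, H (A α) + α * (A α).card ≤ H S + α * S.card)
    (hAmax : ∀ α, ∀ S ∈ D,
      (∀ T ∈ D, H S + α * S.card ≤ H T + α * T.card) → S ⊆ A α)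
    (z : V → ℝ) (hz : ∀ v, z v = max (sSup {α : ℝ | v ∈ A α}) 0) :
    let B : Set (V → ℝ) :=
      {w | (∀ S ∈ D, ∑ v ∈ S, w v ≤ H S) ∧ ∑ v, w v = H Finset.univ}
    let h : (V → ℝ) → EReal := fun x => ⨆ w ∈ B, ((∑ v, x v * w v : ℝ) : EReal)
    let obj : (V → ℝ) → EReal := fun x => h x + ((2⁻¹ * ∑ v, (x v) ^ 2 : ℝ) : EReal)
    (∀ v, 0 ≤ z v) ∧ ∀ x : V → ℝ, (∀ v, 0 ≤ x v) → obj z ≤ obj x :=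
  threshold_vector_minimizes_general D hD0 hDV hDu hDi H hH0 hsub A hAD hAmin hAmax z hz
end

section
/- Let F_e : 2^V → ℝ_+ (e ∈ E) be nonnegative submodular functions with F_e(∅) = F_e(V) = 0, and let b ∈ ℝ^V. The system: 'there exists φ ≥ 0 in ℝ^E such that Σ_e φ(e) F_e(X) ≥ b(X) for all X ⊆ V' is feasible if and only if b(S) ≤ 0 for every S ∈ ker(F), where ker(F) = { S ⊆ V : F_e(S) = 0 for all e ∈ E }. -/
/-! On a finite family every constraint `f X ≤ M * g X` with `g X > 0` holds once `M ≥ f X / g X`,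
and the constraints with `g X = 0` hold by hypothesis; so a single large enough uniform weight
`φ ≡ M` works for `g = Σ_e F_e`, whose zeros are exactly the common zeros of the `F_e`. -/

theorem exists_nonneg_le_mul_of_le_zero_of_eq_zero {ι 𝕜 : Type*} [Finite ι] [Field 𝕜]
    [LinearOrder 𝕜] [IsStrictOrderedRing 𝕜] {f g : ι → 𝕜} (hg : ∀ i, 0 ≤ g i)
    (hf : ∀ i, g i = 0 → f i ≤ 0) : ∃ M, 0 ≤ M ∧ ∀ i, f i ≤ M * g i := by
  obtain ⟨M, hM⟩ := Finite.bddAbove_range fun i => f i / g i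
  refine ⟨max M 0, le_max_right _ _, fun i => ?_⟩
  rcases (hg i).eq_or_lt with hgi | hgi
  · simpa [← hgi] using hf i hgi.symm
  · calc f i = f i / g i * g i := (div_mul_cancel₀ _ hgi.ne').symm
      _ ≤ max M 0 * g i :=
        mul_le_mul_of_nonneg_right ((hM ⟨i, rfl⟩).trans (le_max_left _ _)) hgi.le

theorem laplacian_system_feasibility_general {V E : Type*} [Fintype V] [Fintype E]
    (F : E → Finset V → ℝ)
    (hnn : ∀ e S, 0 ≤ F e S)
    (b : V → ℝ) :
    (∃ φ : E → ℝ, (∀ e, 0 ≤ φ e) ∧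
      ∀ X : Finset V, (∑ v ∈ X, b v) ≤ ∑ e, φ e * F e X) ↔
    (∀ S : Finset V, (∀ e, F e S = 0) → (∑ v ∈ S, b v) ≤ 0) := by
  constructor
  · rintro ⟨φ, -, hφ⟩ S hS
    simpa [hS] using hφ S
  · intro hker
    have hsum_nonneg (X : Finset V) : 0 ≤ ∑ e, F e X := Fintype.sum_nonneg (hnn · X)
    have hker_of_sum_eq_zero (X : Finset V) (hX : ∑ e, F e X = 0) : ∑ v ∈ X, b v ≤ 0 :=
      hker X fun e => congrFun ((Fintype.sum_eq_zero_iff_of_nonneg (hnn · X)).1 hX) e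
    obtain ⟨M, hM_nonneg, hM⟩ :=
      exists_nonneg_le_mul_of_le_zero_of_eq_zero hsum_nonneg hker_of_sum_eq_zero
    exact ⟨fun _ => M, fun _ => hM_nonneg, fun X => by simpa [Finset.mul_sum] using hM X⟩

/-- The system `∃ φ ≥ 0, Σ_e φ(e) F_e(X) ≥ b(X) for all X` is feasible iff
`b(S) ≤ 0` for every `S ∈ ker(F)`. -/
theorem laplacian_system_feasibility {V E : Type*} [Fintype V] [DecidableEq V] [Fintype E]
    (F : E → Finset V → ℝ)
    (hsub : ∀ e (S T : Finset V), F e (S ∪ T) + F e (S ∩ T) ≤ F e S + F e T)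
    (hnn : ∀ e S, 0 ≤ F e S)
    (h0 : ∀ e, F e ∅ = 0) (hV : ∀ e, F e Finset.univ = 0)
    (b : V → ℝ) :
    (∃ φ : E → ℝ, (∀ e, 0 ≤ φ e) ∧
      ∀ X : Finset V, (∑ v ∈ X, b v) ≤ ∑ e, φ e * F e X) ↔
    (∀ S : Finset V, (∀ e, F e S = 0) → (∑ v ∈ S, b v) ≤ 0) :=
  laplacian_system_feasibility_general F hnn b
end

section
/- Let F_e : 2^V → ℝ_+ (e ∈ E) be nonnegative submodular functions with F_e(∅) = F_e(V) = 0, and let u, v, w ∈ V. For b ∈ ℝ^V, call φ ∈ ℝ_+^E feasible for b if Σ_e φ(e) F_e(X) ≥ b(X) for all X ⊆ V. If φ_uv is feasible for e_u − e_v and φ_vw is feasible for e_v − e_w, then the coordinatewise maximum φ_uv ∨ φ_vw is feasible for e_u − e_w. -/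
open scoped BigOperators

/-! The demand of `e_u - e_w` on a cut `X` is dominated by that of `e_u - e_v` when `v ∉ X` and
by that of `e_v - e_w` when `v ∈ X`; since every `F_e` is nonnegative, the capacity of `X`
is monotone in the weights, so `φ_uv ∨ φ_vw` covers both. -/

section

variable {V : Type*} [DecidableEq V]

theorem sum_single_sub_single (X : Finset V) (a b : V) :
    ∑ x ∈ X, (Pi.single a (1 : ℝ) - Pi.single b 1 : V → ℝ) x =
      (if a ∈ X then 1 else 0) - (if b ∈ X then 1 else 0) := by
  simp only [Pi.sub_apply, Finset.sum_sub_distrib, Finset.sum_pi_single']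

theorem sum_single_sub_single_le_max (X : Finset V) (u v w : V) :
    ∑ x ∈ X, (Pi.single u (1 : ℝ) - Pi.single w 1 : V → ℝ) x ≤
      max (∑ x ∈ X, (Pi.single u (1 : ℝ) - Pi.single v 1 : V → ℝ) x)
        (∑ x ∈ X, (Pi.single v (1 : ℝ) - Pi.single w 1 : V → ℝ) x) := by
  simp only [sum_single_sub_single]
  split_ifs <;> norm_num

end

theorem max_sum_mul_le_sum_max_mul {ι : Type*} (s : Finset ι) {f g c : ι → ℝ}
    (hc : ∀ i ∈ s, 0 ≤ c i) :
    max (∑ i ∈ s, f i * c i) (∑ i ∈ s, g i * c i) ≤ ∑ i ∈ s, max (f i) (g i) * c i :=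
  max_le
    (Finset.sum_le_sum fun i hi => mul_le_mul_of_nonneg_right (le_max_left _ _) (hc i hi))
    (Finset.sum_le_sum fun i hi => mul_le_mul_of_nonneg_right (le_max_right _ _) (hc i hi))

theorem max_feasible_for_composition_general {V E : Type*} [Fintype V] [DecidableEq V] [Fintype E]
    (F : E → Finset V → ℝ)
    (hnn : ∀ e S, 0 ≤ F e S)
    (u v w : V) (φuv φvw : E → ℝ)
    (huv : (∀ e, 0 ≤ φuv e) ∧ ∀ X : Finset V,
      (∑ x ∈ X, (Pi.single u (1 : ℝ) - Pi.single v 1 : V → ℝ) x) ≤ ∑ e, φuv e * F e X)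
    (hvw : (∀ e, 0 ≤ φvw e) ∧ ∀ X : Finset V,
      (∑ x ∈ X, (Pi.single v (1 : ℝ) - Pi.single w 1 : V → ℝ) x) ≤ ∑ e, φvw e * F e X) :
    (∀ e, 0 ≤ max (φuv e) (φvw e)) ∧ ∀ X : Finset V,
      (∑ x ∈ X, (Pi.single u (1 : ℝ) - Pi.single w 1 : V → ℝ) x) ≤
        ∑ e, max (φuv e) (φvw e) * F e X := by
  refine ⟨fun e => le_max_of_le_left (huv.1 e), fun X => ?_⟩
  calc _ ≤ max (∑ x ∈ X, (Pi.single u (1 : ℝ) - Pi.single v 1 : V → ℝ) x)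
          (∑ x ∈ X, (Pi.single v (1 : ℝ) - Pi.single w 1 : V → ℝ) x) :=
        sum_single_sub_single_le_max X u v w
    _ ≤ max (∑ e, φuv e * F e X) (∑ e, φvw e * F e X) := max_le_max (huv.2 X) (hvw.2 X)
    _ ≤ _ := max_sum_mul_le_sum_max_mul _ fun e _ => hnn e X

/-- If `φ_uv` is feasible for `e_u − e_v` and `φ_vw` is feasible for `e_v − e_w`,
then the coordinatewise maximum `φ_uv ∨ φ_vw` is feasible for `e_u − e_w`. -/
theorem max_feasible_for_composition {V E : Type*} [Fintype V] [DecidableEq V] [Fintype E]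
    (F : E → Finset V → ℝ)
    (hsub : ∀ e (S T : Finset V), F e (S ∪ T) + F e (S ∩ T) ≤ F e S + F e T)
    (hnn : ∀ e S, 0 ≤ F e S)
    (h0 : ∀ e, F e ∅ = 0) (hV : ∀ e, F e Finset.univ = 0)
    (u v w : V) (φuv φvw : E → ℝ)
    (huv : (∀ e, 0 ≤ φuv e) ∧ ∀ X : Finset V,
      (∑ x ∈ X, (Pi.single u (1 : ℝ) - Pi.single v 1 : V → ℝ) x) ≤ ∑ e, φuv e * F e X)
    (hvw : (∀ e, 0 ≤ φvw e) ∧ ∀ X : Finset V,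
      (∑ x ∈ X, (Pi.single v (1 : ℝ) - Pi.single w 1 : V → ℝ) x) ≤ ∑ e, φvw e * F e X) :
    (∀ e, 0 ≤ max (φuv e) (φvw e)) ∧ ∀ X : Finset V,
      (∑ x ∈ X, (Pi.single u (1 : ℝ) - Pi.single w 1 : V → ℝ) x) ≤
        ∑ e, max (φuv e) (φvw e) * F e X :=
  max_feasible_for_composition_general F hnn u v w φuv φvw huv hvw
end
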